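/- arXiv:2404.17530 — 3 statements merged into one kernel-verified Lean document; each statement's English description precedes it below -/
import Mathlib

section
/- For every nondeterministic parity automaton A and every k ≥ 1, Eve wins the 1-lookahead game on A if and only if Eve wins the k-lookahead game on A. -/
open Filter

/-- A transition: source state, letter, priority, target state. -/
abbrev Tr (Q A : Type) := Q × A × ℕ × Q

def Tr.src {Q A : Type} (t : Tr Q A) : Q := t.1
def Tr.lbl {Q A : Type} (t : Tr Q A) : A := t.2.1
def Tr.pri {Q A : Type} (t : Tr Q A) : ℕ := t.2.2.1
def Tr.tgt {Q A : Type} (t : Tr Q A) : Q := t.2.2.2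

/-- A nondeterministic parity automaton with state type `Q` and alphabet `A`:
an initial state and a set of transitions (finiteness of `Q`, `A` and of the
transition set is assumed in theorem statements). -/
structure NPA (Q A : Type) where
  init : Q
  delta : Set (Tr Q A)

variable {Q P A : Type}

/-- Prepend a letter to an infinite word. -/
def wcons (a : A) (w : ℕ → A) : ℕ → A
  | 0 => a
  | n + 1 => w n

/-- Prepend a finite word to an infinite word. -/
def wcat : List A → (ℕ → A) → ℕ → A
  | [], w => w
  | a :: u, w => wcons a (wcat u w)

/-- The list of the first `n` values of `f`. -/
def pref {α : Type} (f : ℕ → α) (n : ℕ) : List α := (List.range n).map f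

/-- The parity acceptance condition on an infinite sequence of priorities:
the highest priority occurring infinitely often is even. -/
def ParityAccept (pr : ℕ → ℕ) : Prop :=
  ∃ c, Even c ∧ (∃ᶠ n in atTop, pr n = c) ∧ ∀ d, (∃ᶠ n in atTop, pr n = d) → d ≤ c

namespace NPA

/-- `ρ` is a run of `M` on the infinite word `w` starting at state `q`. -/
def IsRun (M : NPA Q A) (q : Q) (w : ℕ → A) (ρ : ℕ → Tr Q A) : Prop :=
  Tr.src (ρ 0) = q ∧
    ∀ n, ρ n ∈ M.delta ∧ Tr.lbl (ρ n) = w n ∧ Tr.src (ρ (n + 1)) = Tr.tgt (ρ n)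

/-- The language of `M` started at state `q`. -/
def LangFrom (M : NPA Q A) (q : Q) : Set (ℕ → A) :=
  {w | ∃ ρ, M.IsRun q w ρ ∧ ParityAccept fun n => Tr.pri (ρ n)}

/-- The language of `M`. -/
def Lang (M : NPA Q A) : Set (ℕ → A) := M.LangFrom M.init

/-- A Büchi automaton: all priorities are 1 or 2. -/
def IsBuchi (M : NPA Q A) : Prop := ∀ t ∈ M.delta, Tr.pri t = 1 ∨ Tr.pri t = 2

/-- A safety automaton: all priorities are 0. -/
def IsSafety (M : NPA Q A) : Prop := ∀ t ∈ M.delta, Tr.pri t = 0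

/-- Determinism: at most one outgoing transition per state and letter. -/
def Deterministic (M : NPA Q A) : Prop :=
  ∀ t₁ ∈ M.delta, ∀ t₂ ∈ M.delta,
    Tr.src t₁ = Tr.src t₂ → Tr.lbl t₁ = Tr.lbl t₂ → t₁ = t₂

/-- The transition `t` is language-preserving: `L(M, tgt t) = (lbl t)⁻¹ L(M, src t)`. -/
def LangPres (M : NPA Q A) (t : Tr Q A) : Prop :=
  M.LangFrom (Tr.tgt t) = {w | wcons (Tr.lbl t) w ∈ M.LangFrom (Tr.src t)}

/-- Semantic determinism: every transition is language-preserving. -/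
def SemDet (M : NPA Q A) : Prop := ∀ t ∈ M.delta, M.LangPres t

/-- `M.FinRun q u p`: there is a finite run of `M` on the finite word `u`
from state `q` ending in state `p`. -/
inductive FinRun (M : NPA Q A) : Q → List A → Q → Prop
  | nil (q : Q) : FinRun M q [] q
  | cons {q : Q} {a : A} {c : ℕ} {p r : Q} {u : List A} :
      (q, a, c, p) ∈ M.delta → FinRun M p u r → FinRun M q (a :: u) r

/-- `ρ` (restricted to indices `< u.length`) is a finite run of `M` on the
finite word `u` starting at state `q`. -/
def IsFinRunOn (M : NPA Q A) (q : Q) (u : List A) (ρ : ℕ → Tr Q A) : Prop :=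
  (0 < u.length → Tr.src (ρ 0) = q) ∧
    ∀ i, (h : i < u.length) →
      ρ i ∈ M.delta ∧ Tr.lbl (ρ i) = u.get ⟨i, h⟩ ∧
        (i + 1 < u.length → Tr.src (ρ (i + 1)) = Tr.tgt (ρ i))

/-- History-determinism: Eve has a strategy in the history-determinism game,
choosing in each round a transition depending only on the letters played so
far (her own previous moves are determined by the strategy), which always
builds a run and builds an accepting run whenever Adam's word is in `L(M)`. -/
def HD (M : NPA Q A) : Prop :=
  ∃ σ : List A → Tr Q A,
    ∀ w : ℕ → A,
      M.IsRun M.init w (fun n => σ (pref w (n + 1))) ∧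
        (w ∈ M.Lang → ParityAccept fun n => Tr.pri (σ (pref w (n + 1))))

end NPA

/-- `B` simulates `M`: Eve has a strategy in the simulation game (in each round
Adam plays a letter and a transition of `M`, then Eve plays a transition of `B`)
such that against every word together with a run of `M` on it, she builds a run
of `B`, which is accepting whenever Adam's run is accepting. -/
def Simulates (B : NPA P A) (M : NPA Q A) : Prop :=
  ∃ σ : List (A × Tr Q A) → Tr P A,
    ∀ (w : ℕ → A) (ρ : ℕ → Tr Q A), M.IsRun M.init w ρ →
      B.IsRun B.init w (fun n => σ (pref (fun i => (w i, ρ i)) (n + 1))) ∧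
        ((ParityAccept fun n => Tr.pri (ρ n)) →
          ParityAccept fun n => Tr.pri (σ (pref (fun i => (w i, ρ i)) (n + 1))))

/-- `B` step-ahead simulates `M`: as in the simulation game, but in each round
Eve picks her transition of `B` (knowing the current letter and all previous
rounds) before Adam picks his transition of `M`. -/
def StepAheadSimulates (B : NPA P A) (M : NPA Q A) : Prop :=
  ∃ σ : List (A × Tr Q A) → A → Tr P A,
    ∀ (w : ℕ → A) (ρ : ℕ → Tr Q A), M.IsRun M.init w ρ →
      B.IsRun B.init w (fun n => σ (pref (fun i => (w i, ρ i)) n) (w n)) ∧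
        ((ParityAccept fun n => Tr.pri (ρ n)) →
          ParityAccept fun n => Tr.pri (σ (pref (fun i => (w i, ρ i)) n) (w n)))

/-- Eve wins the `k`-token game on `M`: she has a strategy, choosing in each
round a transition from the current letter and the full history of previous
rounds (letters and Adam's `k` transitions), such that against every word and
every `k` runs of Adam on it, she builds a run of `M`, which is accepting
whenever at least one of Adam's `k` runs is accepting. -/
def EveWinsTokenGame (k : ℕ) (M : NPA Q A) : Prop :=
  ∃ σ : List (A × (Fin k → Tr Q A)) → A → Tr Q A,
    ∀ (w : ℕ → A) (ρ : Fin k → ℕ → Tr Q A), (∀ i, M.IsRun M.init w (ρ i)) →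
      M.IsRun M.init w (fun n => σ (pref (fun m => (w m, fun i => ρ i m)) n) (w n)) ∧
        ((∃ i, ParityAccept fun n => Tr.pri (ρ i n)) →
          ParityAccept fun n => Tr.pri (σ (pref (fun m => (w m, fun i => ρ i m)) n) (w n)))

/-- The state of Adam's token before round `n` in the Joker game, given his
moves `am` (a transition together with a Joker flag in each round). -/
def jokerAdamState (M : NPA Q A) (am : ℕ → Tr Q A × Bool) : ℕ → Q
  | 0 => M.init
  | n + 1 => Tr.tgt (am n).1

/-- Validity of Adam's moves `am` in the Joker game against Eve's run `ρE`:
in each round Adam's transition is a transition of `M` on the current letter;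
it starts at his token's state if he does not play Joker, and at the current
state of Eve's token if he plays Joker. -/
def JokerValid (M : NPA Q A) (w : ℕ → A) (am : ℕ → Tr Q A × Bool)
    (ρE : ℕ → Tr Q A) : Prop :=
  ∀ n, (am n).1 ∈ M.delta ∧ Tr.lbl (am n).1 = w n ∧
    ((am n).2 = false → Tr.src (am n).1 = jokerAdamState M am n) ∧
    ((am n).2 = true → Tr.src (am n).1 = Tr.src (ρE n))

/-- Eve wins the Joker game on `M`: she has a strategy such that against every
valid play of Adam she builds a run of `M`, which is accepting whenever Adam
plays only finitely many Jokers and his sequence of transitions satisfies the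
parity acceptance condition. -/
def EveWinsJoker (M : NPA Q A) : Prop :=
  ∃ σ : List (A × (Tr Q A × Bool)) → A → Tr Q A,
    ∀ (w : ℕ → A) (am : ℕ → Tr Q A × Bool),
      JokerValid M w am (fun n => σ (pref (fun m => (w m, am m)) n) (w n)) →
        M.IsRun M.init w (fun n => σ (pref (fun m => (w m, am m)) n) (w n)) ∧
          (({n | (am n).2 = true}.Finite ∧ (ParityAccept fun n => Tr.pri (am n).1)) →
            ParityAccept fun n => Tr.pri (σ (pref (fun m => (w m, am m)) n) (w n)))

/-- The `Delay` construction: states are `Q × A` plus a fresh initial state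
(`none`); from the initial state, on each letter `a` move with priority 0 to
`(init, a)`; from `(p, a)`, on each letter `a'`, for each transition
`p →(a:c) q` of `M`, move with priority `c` to `(q, a')`. -/
def NPA.Delay (M : NPA Q A) : NPA (Option (Q × A)) A where
  init := none
  delta :=
    {t | (∃ a : A, t = (none, a, 0, some (M.init, a))) ∨
      ∃ u ∈ M.delta, ∃ a' : A,
        t = (some (Tr.src u, Tr.lbl u), a', Tr.pri u, some (Tr.tgt u, a'))}

/-- The state type of the `k`-fold `Delay` of an automaton over `Q`, `A`. -/
def DelayState (Q A : Type) : ℕ → Type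
  | 0 => Q
  | k + 1 => Option (DelayState Q A k × A)

/-- `k`-fold application of `Delay`. -/
def NPA.DelayIter (M : NPA Q A) : (k : ℕ) → NPA (DelayState Q A k) A
  | 0 => M
  | k + 1 => (M.DelayIter k).Delay

/-- The subautomaton of `M` keeping exactly the language-preserving transitions. -/
def NPA.residual (M : NPA Q A) : NPA Q A where
  init := M.init
  delta := {t ∈ M.delta | M.LangPres t}

section Aux

variable {P A B Q : Type}

lemma pref_length {α : Type} (f : ℕ → α) (n : ℕ) : (pref f n).length = n := by
  simp [pref]

lemma pref_getD {α : Type} (f : ℕ → α) {i n : ℕ} (h : i < n) (d : α) :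
    (pref f n).getD i d = f i := by
  rw [List.getD_eq_getElem]
  · simp [pref]
  · simpa [pref] using h

lemma pref_take {α : Type} (f : ℕ → α) {j n : ℕ} (h : j ≤ n) :
    (pref f n).take j = pref f j := by
  simp [pref, List.take_range, ← List.map_take, Nat.min_eq_left h]

lemma pref_congr {α : Type} {f g : ℕ → α} {n : ℕ} (h : ∀ i < n, f i = g i) :
    pref f n = pref g n := by
  unfold pref
  exact List.map_congr_left (fun i hi => h i (List.mem_range.mp hi))

lemma frequently_shift_iff {p : ℕ → Prop} :
    (∃ᶠ n in atTop, p (n + 1)) ↔ (∃ᶠ n in atTop, p n) := by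
  rw [Filter.frequently_atTop, Filter.frequently_atTop]
  constructor
  · intro h a
    obtain ⟨b, hb, hpb⟩ := h a
    exact ⟨b + 1, by omega, hpb⟩
  · intro h a
    obtain ⟨b, hb, hpb⟩ := h (a + 1)
    obtain ⟨m, rfl⟩ : ∃ m, b = m + 1 := ⟨b - 1, by omega⟩
    exact ⟨m, by omega, hpb⟩

lemma parity_shift {pr pr' : ℕ → ℕ} (h : ∀ n, pr' (n + 1) = pr n) :
    ParityAccept pr' ↔ ParityAccept pr := by
  have key : ∀ c, (∃ᶠ n in atTop, pr' n = c) ↔ (∃ᶠ n in atTop, pr n = c) := by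
    intro c
    rw [← frequently_shift_iff (p := fun n => pr' n = c)]
    simp only [h]
  constructor <;> rintro ⟨c, hc, hfreq, hmax⟩
  · exact ⟨c, hc, (key c).mp hfreq, fun d hd => hmax d ((key d).mpr hd)⟩
  · exact ⟨c, hc, (key c).mpr hfreq, fun d hd => hmax d ((key d).mp hd)⟩

end Aux
section Delay

variable {P A : Type}

/-- The canonical run of `Delay N` on `w` corresponding to the run `u` of `N` on `w`. -/
def delayRun (N : NPA P A) (w : ℕ → A) (u : ℕ → Tr P A) : ℕ → Tr (Option (P × A)) A
  | 0 => (none, w 0, 0, some (N.init, w 0))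
  | n + 1 => (some (Tr.src (u n), Tr.lbl (u n)), w (n + 1), Tr.pri (u n),
      some (Tr.tgt (u n), w (n + 1)))

/-- Decode a transition of `Delay N` into the underlying transition of `N`. -/
def undelay (d : P) (t : Tr (Option (P × A)) A) : Tr P A :=
  match t.1, t.2.2.2 with
  | some (p, a), some (q, _) => (p, a, t.2.2.1, q)
  | _, _ => (d, t.2.1, t.2.2.1, d)

lemma undelay_eq (d : P) (v : Tr P A) (a : A) :
    undelay d (some (Tr.src v, Tr.lbl v), a, Tr.pri v, some (Tr.tgt v, a)) = v := rfl

lemma delayRun_congr (N : NPA P A) {w w' : ℕ → A} {u u' : ℕ → Tr P A} {i : ℕ}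
    (hw : ∀ j ≤ i, w j = w' j) (hu : ∀ j < i, u j = u' j) :
    delayRun N w u i = delayRun N w' u' i := by
  cases i with
  | zero => simp [delayRun, hw 0 (Nat.zero_le 0)]
  | succ m => simp [delayRun, hw (m + 1) le_rfl, hw m (by omega), hu m (Nat.lt_succ_self m)]

lemma isRun_delayRun (N : NPA P A) {w : ℕ → A} {u : ℕ → Tr P A}
    (h : N.IsRun N.init w u) : N.Delay.IsRun none w (delayRun N w u) := by
  obtain ⟨h0, hstep⟩ := h
  refine ⟨rfl, fun n => ?_⟩
  cases n with
  | zero =>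
    refine ⟨Or.inl ⟨w 0, rfl⟩, rfl, ?_⟩
    show some (Tr.src (u 0), Tr.lbl (u 0)) = some (N.init, w 0)
    rw [h0, (hstep 0).2.1]
  | succ m =>
    refine ⟨Or.inr ⟨u m, (hstep m).1, w (m + 1), rfl⟩, rfl, ?_⟩
    show some (Tr.src (u (m + 1)), Tr.lbl (u (m + 1))) = some (Tr.tgt (u m), w (m + 1))
    rw [(hstep m).2.2, (hstep (m + 1)).2.1]

lemma delay_run_spec (N : NPA P A) {w : ℕ → A} {ρ : ℕ → Tr (Option (P × A)) A}
    (hρ : N.Delay.IsRun none w ρ) :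
    N.IsRun N.init w (fun n => undelay N.init (ρ (n + 1))) ∧
      ∀ n, Tr.pri (ρ (n + 1)) = Tr.pri (undelay N.init (ρ (n + 1))) := by
  obtain ⟨h0, hstep⟩ := hρ
  have hshape0 : ρ 0 = (none, w 0, 0, some (N.init, w 0)) := by
    rcases (hstep 0).1 with ⟨a, ha⟩ | ⟨v, hv, a', ha'⟩
    · have hl := (hstep 0).2.1
      rw [ha] at hl ⊢
      simp only [Tr.lbl] at hl
      rw [hl]
    · exfalso
      rw [ha'] at h0
      simp [Tr.src] at h0
  have hshape : ∀ n, ∃ v ∈ N.delta, ρ (n + 1) =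
      (some (Tr.src v, Tr.lbl v), w (n + 1), Tr.pri v, some (Tr.tgt v, w (n + 1))) := by
    intro n
    rcases (hstep (n + 1)).1 with ⟨a, ha⟩ | ⟨v, hv, a', ha'⟩
    · exfalso
      have h1 : Tr.src (ρ (n + 1)) = Tr.tgt (ρ n) := (hstep n).2.2
      rcases (hstep n).1 with ⟨b, hb⟩ | ⟨v, hv, b, hb⟩ <;>
        rw [ha, hb] at h1 <;> simp [Tr.src, Tr.tgt] at h1
    · have hl : Tr.lbl (ρ (n + 1)) = w (n + 1) := (hstep (n + 1)).2.1
      rw [ha'] at hl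
      simp only [Tr.lbl] at hl
      rw [hl] at ha'
      exact ⟨v, hv, ha'⟩
  choose v hvmem hveq using hshape
  have huv : ∀ n, undelay N.init (ρ (n + 1)) = v n := by
    intro n
    rw [hveq n]
    exact undelay_eq _ _ _
  have hbase : Tr.src (v 0) = N.init ∧ Tr.lbl (v 0) = w 0 := by
    have h1 : Tr.src (ρ 1) = Tr.tgt (ρ 0) := (hstep 0).2.2
    rw [hveq 0, hshape0] at h1
    simpa [Tr.src, Tr.tgt] using h1
  have hchain : ∀ m, Tr.src (v (m + 1)) = Tr.tgt (v m) ∧ Tr.lbl (v (m + 1)) = w (m + 1) := by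
    intro m
    have h1 : Tr.src (ρ (m + 2)) = Tr.tgt (ρ (m + 1)) := (hstep (m + 1)).2.2
    rw [hveq (m + 1), hveq m] at h1
    simpa [Tr.src, Tr.tgt] using h1
  refine ⟨⟨by simp only [huv]; exact hbase.1, fun n => ?_⟩,
    fun n => by rw [huv n, hveq n]; rfl⟩
  refine ⟨by simp only [huv]; exact hvmem n, ?_, ?_⟩
  · cases n with
    | zero => simp only [huv]; exact hbase.2
    | succ m => simp only [huv]; exact (hchain m).2
  · simp only [huv]
    exact (hchain n).1

lemma parityAccept_delayRun_iff (N : NPA P A) (w : ℕ → A) (u : ℕ → Tr P A) :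
    ParityAccept (fun n => Tr.pri (delayRun N w u n)) ↔ ParityAccept (fun n => Tr.pri (u n)) :=
  parity_shift (fun n => rfl)

end Delay
section Strat

variable {P A Q' Q1 Q2 Q3 : Type}

/-- Transitivity of simulation. -/
lemma simulates_trans {B : NPA Q1 A} {C : NPA Q2 A} {D : NPA Q3 A}
    (h1 : Simulates B C) (h2 : Simulates C D) : Simulates B D := by
  obtain ⟨σ1, hσ1⟩ := h1
  obtain ⟨σ2, hσ2⟩ := h2
  classical
  let d : A × Tr Q3 A := (Tr.lbl (σ2 []), (D.init, Tr.lbl (σ2 []), 0, D.init))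
  refine ⟨fun hist => σ1 (pref (fun i => ((hist.getD i d).1, σ2 (hist.take (i + 1))))
    hist.length), ?_⟩
  intro w ρ hρ
  have hC := hσ2 w ρ hρ
  have hB := hσ1 w (fun n => σ2 (pref (fun i => (w i, ρ i)) (n + 1))) hC.1
  have hfun : ∀ n,
      σ1 (pref (fun i => (((pref (fun i => (w i, ρ i)) (n + 1)).getD i d).1,
        σ2 ((pref (fun i => (w i, ρ i)) (n + 1)).take (i + 1))))
          (pref (fun i => (w i, ρ i)) (n + 1)).length) =
      σ1 (pref (fun i => (w i, σ2 (pref (fun j => (w j, ρ j)) (i + 1)))) (n + 1)) := by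
    intro n
    congr 1
    rw [pref_length]
    apply pref_congr
    intro i hi
    rw [pref_getD _ hi, pref_take _ (by omega : i + 1 ≤ n + 1)]
  constructor
  · simpa only [hfun] using hB.1
  · intro hacc
    simpa only [hfun] using hB.2 (hC.2 hacc)

/-- If `B` simulates `Delay N` then `B` simulates `N`. -/
lemma sim_of_sim_delay {B : NPA Q' A} {N : NPA P A}
    (h : Simulates B N.Delay) : Simulates B N := by
  obtain ⟨σ, hσ⟩ := h
  let a₀ : A := Tr.lbl (σ [])
  let d : A × Tr P A := (a₀, (N.init, a₀, 0, N.init))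
  refine ⟨fun hist => σ (pref (fun i => ((hist.getD i d).1,
      delayRun N (fun j => (hist.getD j d).1) (fun j => (hist.getD j d).2) i))
        hist.length), ?_⟩
  intro w u hu
  have hdel : N.Delay.IsRun N.Delay.init w (delayRun N w u) := isRun_delayRun N hu
  have hB := hσ w (delayRun N w u) hdel
  have hfun : ∀ n,
      σ (pref (fun i => (((pref (fun i => (w i, u i)) (n + 1)).getD i d).1,
        delayRun N (fun j => ((pref (fun i => (w i, u i)) (n + 1)).getD j d).1)
          (fun j => ((pref (fun i => (w i, u i)) (n + 1)).getD j d).2) i))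
            (pref (fun i => (w i, u i)) (n + 1)).length) =
      σ (pref (fun i => (w i, delayRun N w u i)) (n + 1)) := by
    intro n
    congr 1
    rw [pref_length]
    apply pref_congr
    intro i hi
    have hgw : ∀ j ≤ i, ((pref (fun i => (w i, u i)) (n + 1)).getD j d).1 = w j := by
      intro j hj
      rw [pref_getD _ (by omega : j < n + 1)]
    have hgu : ∀ j < i, ((pref (fun i => (w i, u i)) (n + 1)).getD j d).2 = u j := by
      intro j hj
      rw [pref_getD _ (by omega : j < n + 1)]
    rw [Prod.ext_iff]
    exact ⟨hgw i le_rfl, delayRun_congr N hgw hgu⟩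
  constructor
  · simpa only [hfun] using hB.1
  · intro hacc
    have := hB.2 ((parityAccept_delayRun_iff N w u).mpr hacc)
    simpa only [hfun] using this

/-- Lifting a simulation through `Delay`. -/
lemma simulates_delay_lift {B : NPA Q' A} {N : NPA P A}
    (h : Simulates B N) : Simulates B.Delay N.Delay := by
  obtain ⟨σ, hσ⟩ := h
  let a₀ : A := Tr.lbl (σ [])
  let d : A × Tr (Option (P × A)) A := (a₀, (none, a₀, 0, none))
  refine ⟨fun hist =>
    match hist.length with
    | 0 => (none, a₀, 0, none)
    | 1 => (none, (hist.getD 0 d).1, 0, some (B.init, (hist.getD 0 d).1))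
    | n + 2 =>
      (fun v => (some (Tr.src v, Tr.lbl v), (hist.getD (n + 1) d).1, Tr.pri v,
          some (Tr.tgt v, (hist.getD (n + 1) d).1)))
        (σ (pref (fun i => ((hist.getD i d).1, undelay N.init (hist.getD (i + 1) d).2))
          (n + 1))), ?_⟩
  intro w ρ hρ
  have hspec := delay_run_spec N hρ
  have hB := hσ w (fun n => undelay N.init (ρ (n + 1))) hspec.1
  set v : ℕ → Tr Q' A :=
    fun n => σ (pref (fun i => (w i, undelay N.init (ρ (i + 1)))) (n + 1)) with hv
  have hfun : ∀ n,
      (match (pref (fun i => (w i, ρ i)) (n + 1)).length with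
        | 0 => (none, a₀, 0, none)
        | 1 => (none, ((pref (fun i => (w i, ρ i)) (n + 1)).getD 0 d).1, 0,
            some (B.init, ((pref (fun i => (w i, ρ i)) (n + 1)).getD 0 d).1))
        | m + 2 =>
          (fun v' => (some (Tr.src v', Tr.lbl v'),
              ((pref (fun i => (w i, ρ i)) (n + 1)).getD (m + 1) d).1, Tr.pri v',
              some (Tr.tgt v', ((pref (fun i => (w i, ρ i)) (n + 1)).getD (m + 1) d).1)))
            (σ (pref (fun i => (((pref (fun i => (w i, ρ i)) (n + 1)).getD i d).1,
              undelay N.init ((pref (fun i => (w i, ρ i)) (n + 1)).getD (i + 1) d).2))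
                (m + 1))) : Tr (Option (Q' × A)) A) =
      delayRun B w v n := by
    intro n
    rw [pref_length]
    cases n with
    | zero =>
      show (none, ((pref (fun i => (w i, ρ i)) 1).getD 0 d).1, 0,
          some (B.init, ((pref (fun i => (w i, ρ i)) 1).getD 0 d).1)) = _
      rw [pref_getD _ (by omega : 0 < 1)]
      rfl
    | succ m =>
      show (fun v' => (some (Tr.src v', Tr.lbl v'),
          ((pref (fun i => (w i, ρ i)) (m + 2)).getD (m + 1) d).1, Tr.pri v',
          some (Tr.tgt v', ((pref (fun i => (w i, ρ i)) (m + 2)).getD (m + 1) d).1)))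
        (σ (pref (fun i => (((pref (fun i => (w i, ρ i)) (m + 2)).getD i d).1,
          undelay N.init ((pref (fun i => (w i, ρ i)) (m + 2)).getD (i + 1) d).2))
            (m + 1))) = delayRun B w v (m + 1)
      have hinner : pref (fun i => (((pref (fun i => (w i, ρ i)) (m + 2)).getD i d).1,
          undelay N.init ((pref (fun i => (w i, ρ i)) (m + 2)).getD (i + 1) d).2)) (m + 1) =
          pref (fun i => (w i, undelay N.init (ρ (i + 1)))) (m + 1) := by
        apply pref_congr
        intro i hi
        rw [pref_getD _ (by omega : i < m + 2), pref_getD _ (by omega : i + 1 < m + 2)]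
      rw [hinner, pref_getD _ (by omega : m + 1 < m + 2)]
      rfl
  constructor
  · show B.Delay.IsRun B.Delay.init w _
    simp only [hfun]
    exact isRun_delayRun B hB.1
  · intro hacc
    simp only [hfun]
    apply (parityAccept_delayRun_iff B w v).mpr
    apply hB.2
    exact (parity_shift hspec.2).mp hacc

end Strat
/-- From the 1-lookahead game, Eve wins every `k`-lookahead game. -/
lemma sim_delayIter_of_sim_delay {Q A : Type} (M : NPA Q A)
    (h1 : Simulates M (M.DelayIter 1)) (j : ℕ) : Simulates M (M.DelayIter (j + 1)) := by
  have aux : ∀ i, Simulates (M.DelayIter i) (M.DelayIter (i + 1)) := by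
    intro i
    induction i with
    | zero => exact h1
    | succ i ih => exact simulates_delay_lift ih
  induction j with
  | zero => exact h1
  | succ j ih => exact simulates_trans ih (aux (j + 1))

/-- From the `k`-lookahead game, Eve wins the 1-lookahead game. -/
lemma sim_delay_of_sim_delayIter {Q A : Type} (M : NPA Q A) (j : ℕ)
    (h : Simulates M (M.DelayIter (j + 1))) : Simulates M (M.DelayIter 1) := by
  induction j with
  | zero => exact h
  | succ j ih => exact ih (sim_of_sim_delay h)

/-- For every nondeterministic parity automaton A and every k ≥ 1,
Eve wins the 1-lookahead game on A iff Eve wins the k-lookahead game on A,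
where the k-lookahead game on A is the simulation game between A and Delay^k(A). -/
theorem lookahead_games_equivalent {Q A : Type} [Finite Q] [Finite A]
    (M : NPA Q A) (hfin : M.delta.Finite) (k : ℕ) (hk : 1 ≤ k) :
    Simulates M (M.DelayIter 1) ↔ Simulates M (M.DelayIter k) := by
  obtain ⟨j, rfl⟩ : ∃ j, k = j + 1 := ⟨k - 1, by omega⟩
  exact ⟨fun h1 => sim_delayIter_of_sim_delay M h1 j,
    fun h => sim_delay_of_sim_delayIter M j h⟩
end

section
/- Let A be the parity automaton over the alphabet {a,b} with states {p,q}, initial state p, and transitions p →(a:1) p, p →(b:2) p, p →(a:3) q, p →(b:3) q, q →(a:2) q, q →(b:1) q, q →(a:3) p, q →(b:3) p. Then Eve wins the Joker game on A, but A is not history-deterministic. In particular, the Joker game does not characterise history-determinism for parity automata. -/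
open Filter

variable {Q P A : Type}

/-- The parity automaton over the alphabet {a,b} (encoded as {false,true}) with states
{p,q} (encoded as {false,true}), initial state p, and transitions
p →(a:1) p, p →(b:2) p, p →(a:3) q, p →(b:3) q,
q →(a:2) q, q →(b:1) q, q →(a:3) p, q →(b:3) p. -/
def counterexampleAut : NPA Bool Bool where
  init := false
  delta :=
    {(false, false, 1, false), (false, true, 2, false),
     (false, false, 3, true), (false, true, 3, true),
     (true, false, 2, true), (true, true, 1, true),
     (true, false, 3, false), (true, true, 3, false)}

/- auxiliary lemmas for joker_game_counterexample -/

lemma pref_succ' {α : Type} (f : ℕ → α) (n : ℕ) : pref f (n + 1) = pref f n ++ [f n] := by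
  simp [pref, List.range_succ]

lemma parityAccept_congr' {p1 p2 : ℕ → ℕ} (h : ∀ᶠ n in atTop, p1 n = p2 n)
    (hp : ParityAccept p1) : ParityAccept p2 := by
  obtain ⟨c, hc, hf, hmax⟩ := hp
  refine ⟨c, hc, ?_, ?_⟩
  · exact (hf.and_eventually h).mono fun n ⟨h1, h2⟩ => h2 ▸ h1
  · intro d hd
    exact hmax d ((hd.and_eventually h).mono fun n ⟨h1, h2⟩ => h2.trans h1)

lemma mem_cex_delta_iff (t : Tr Bool Bool) : t ∈ counterexampleAut.delta ↔
    t = (false, false, 1, false) ∨ t = (false, true, 2, false) ∨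
    t = (false, false, 3, true) ∨ t = (false, true, 3, true) ∨
    t = (true, false, 2, true) ∨ t = (true, true, 1, true) ∨
    t = (true, false, 3, false) ∨ t = (true, true, 3, false) := by
  simp [counterexampleAut, Set.mem_insert_iff]

lemma cex_delta_pri {t : Tr Bool Bool} (ht : t ∈ counterexampleAut.delta) :
    Tr.pri t = 1 ∨ Tr.pri t = 2 ∨ Tr.pri t = 3 := by
  rw [mem_cex_delta_iff] at ht
  rcases ht with rfl|rfl|rfl|rfl|rfl|rfl|rfl|rfl <;> simp [Tr.pri]

lemma cex_delta_nonswitch {t : Tr Bool Bool} (ht : t ∈ counterexampleAut.delta)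
    (h3 : Tr.pri t ≠ 3) : Tr.src t = Tr.tgt t ∧
      Tr.pri t = if Tr.lbl t = Tr.src t then 1 else 2 := by
  rw [mem_cex_delta_iff] at ht
  rcases ht with rfl|rfl|rfl|rfl|rfl|rfl|rfl|rfl <;>
    simp_all [Tr.src, Tr.tgt, Tr.pri, Tr.lbl]

lemma cex_delta_src_eq_lbl {t : Tr Bool Bool} (ht : t ∈ counterexampleAut.delta)
    (h : Tr.lbl t = Tr.src t) : Tr.pri t = 1 ∨ Tr.pri t = 3 := by
  rw [mem_cex_delta_iff] at ht
  rcases ht with rfl|rfl|rfl|rfl|rfl|rfl|rfl|rfl <;> simp_all [Tr.src, Tr.pri, Tr.lbl]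

/-- Eve's token position tracker: target of the last of Adam's transitions. -/
def tstate (h : List (Bool × (Tr Bool Bool × Bool))) : Bool :=
  match h.getLast? with
  | none => false
  | some x => Tr.tgt x.2.1

/-- Eve's Joker-game strategy: move to Adam's previous token state. -/
def jstrat (h : List (Bool × (Tr Bool Bool × Bool))) (a : Bool) : Tr Bool Bool :=
  (tstate h.dropLast, a,
    if tstate h.dropLast = tstate h then (if a = tstate h.dropLast then 1 else 2) else 3,
    tstate h)

lemma jstrat_mem (h : List (Bool × (Tr Bool Bool × Bool))) (a : Bool) :
    jstrat h a ∈ counterexampleAut.delta := by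
  rw [mem_cex_delta_iff]
  unfold jstrat
  generalize tstate h.dropLast = e
  generalize tstate h = t
  revert e t a
  decide

lemma tstate_pref_succ (f : ℕ → Bool × (Tr Bool Bool × Bool)) (n : ℕ) :
    tstate (pref f (n + 1)) = Tr.tgt (f n).2.1 := by
  rw [pref_succ']
  simp [tstate, List.getLast?_concat]

lemma dropLast_pref_succ (f : ℕ → Bool × (Tr Bool Bool × Bool)) (n : ℕ) :
    (pref f (n + 1)).dropLast = pref f n := by
  rw [pref_succ']
  exact List.dropLast_concat

lemma tstate_pref_jAS (w : ℕ → Bool) (am : ℕ → Tr Bool Bool × Bool) (n : ℕ) :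
    tstate (pref (fun m => (w m, am m)) n) = jokerAdamState counterexampleAut am n := by
  cases n with
  | zero => rfl
  | succ m => rw [tstate_pref_succ]; rfl
/-- Prefixes of the adversarial word against an HD strategy. -/
def advL (σ : List Bool → Tr Bool Bool) : ℕ → List Bool
  | 0 => []
  | 1 => [false]
  | n + 2 => advL σ (n + 1) ++ [Tr.tgt (σ (advL σ (n + 1)))]

/-- The adversarial word: each letter is Eve's current state. -/
def advW (σ : List Bool → Tr Bool Bool) : ℕ → Bool
  | 0 => false
  | n + 1 => Tr.tgt (σ (advL σ (n + 1)))

lemma pref_advW (σ : List Bool → Tr Bool Bool) (n : ℕ) :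
    pref (advW σ) n = advL σ n := by
  induction n with
  | zero => rfl
  | succ m ih =>
    rw [pref_succ', ih]
    cases m with
    | zero => rfl
    | succ k => rfl

/-- Every word is in the language of the counterexample automaton. -/
lemma cex_lang_univ (w : ℕ → Bool) : w ∈ counterexampleAut.Lang := by
  by_cases hinf : {n | w n = true}.Infinite
  · refine ⟨fun n => (false, w n, if w n then 2 else 1, false), ⟨rfl, fun n => ⟨?_, rfl, rfl⟩⟩, ?_⟩
    · rw [mem_cex_delta_iff]
      cases h : w n <;> simp [h]
    · refine ⟨2, by decide, ?_, ?_⟩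
      · have hfr : ∃ᶠ n in atTop, w n = true := Nat.frequently_atTop_iff_infinite.2 hinf
        exact hfr.mono fun n hn => by simp [Tr.pri, hn]
      · intro d hd
        obtain ⟨n, hn⟩ := hd.exists
        simp only [Tr.pri] at hn
        split at hn <;> omega
  · rw [Set.not_infinite] at hinf
    obtain ⟨B, hB⟩ := hinf.bddAbove
    set N := B + 1 with hN
    have hw : ∀ n, N ≤ n → w n = false := by
      intro n hn
      by_contra h
      rw [Bool.not_eq_false] at h
      have := hB h
      omega
    refine ⟨fun n => if n < N then (false, w n, if w n then 2 else 1, false)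
        else if n = N then (false, w n, 3, true) else (true, w n, 2, true), ⟨?_, ?_⟩, ?_⟩
    · dsimp only
      rw [if_pos (show 0 < N by omega)]
      rfl
    · intro n
      dsimp only
      refine ⟨?_, ?_, ?_⟩
      · rcases Nat.lt_trichotomy n N with h|h|h
        · rw [if_pos h, mem_cex_delta_iff]
          cases hx : w n <;> simp [hx]
        · rw [if_neg (by omega), if_pos h, mem_cex_delta_iff]
          cases hx : w n <;> simp [hx]
        · rw [if_neg (by omega), if_neg (by omega), mem_cex_delta_iff]
          rw [hw n (by omega)]
          simp
      · rcases Nat.lt_trichotomy n N with h|h|h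
        · rw [if_pos h]; rfl
        · rw [if_neg (by omega), if_pos h]; rfl
        · rw [if_neg (by omega), if_neg (by omega)]; rfl
      · rcases Nat.lt_trichotomy n N with h|h|h
        · rw [if_pos h]
          rcases Nat.lt_or_ge (n+1) N with h2|h2
          · rw [if_pos h2]; rfl
          · have : n + 1 = N := by omega
            rw [if_neg (by omega), if_pos this]; rfl
        · rw [if_neg (by omega), if_pos h, if_neg (by omega), if_neg (by omega)]; rfl
        · rw [if_neg (by omega), if_neg (by omega), if_neg (by omega), if_neg (by omega)]; rfl
    · dsimp only
      have hev : ∀ᶠ n in atTop, Tr.pri (if n < N then ((false, w n, if w n then 2 else 1, false) : Tr Bool Bool)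
          else if n = N then (false, w n, 3, true) else (true, w n, 2, true)) = 2 := by
        rw [eventually_atTop]
        exact ⟨N + 1, fun n hn => by rw [if_neg (by omega), if_neg (by omega)]; rfl⟩
      refine ⟨2, by decide, hev.frequently, ?_⟩
      intro d hd
      dsimp only at hd
      obtain ⟨n, hn1, hn2⟩ := (hd.and_eventually hev).exists
      omega
/-- Eve wins the Joker game on the automaton above, but it is not
history-deterministic; in particular, the Joker game does not characterise
history-determinism for parity automata. -/
theorem joker_game_counterexample :
    EveWinsJoker counterexampleAut ∧ ¬ counterexampleAut.HD := by
  constructor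
  · -- Eve wins the Joker game with `jstrat`.
    refine ⟨jstrat, fun w am hvalid => ⟨⟨rfl, fun n => ⟨jstrat_mem _ _, rfl, ?_⟩⟩, ?_⟩⟩
    · -- the strategy builds a run
      show tstate ((pref (fun m => (w m, am m)) (n + 1)).dropLast) =
        tstate (pref (fun m => (w m, am m)) n)
      rw [dropLast_pref_succ]
    · -- and the run is accepting when Adam plays fairly and accepts
      rintro ⟨hjfin, c, hceven, hcfreq, hcmax⟩
      have hmem : ∀ n, (am n).1 ∈ counterexampleAut.delta := fun n => (hvalid n).1
      have hc2 : c = 2 := by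
        obtain ⟨n, hn⟩ := hcfreq.exists
        have hn' : Tr.pri (am n).1 = c := hn
        rcases cex_delta_pri (hmem n) with h|h|h <;> rw [h] at hn'
        · exact absurd (hn'.symm ▸ hceven) (by decide)
        · omega
        · exact absurd (hn'.symm ▸ hceven) (by decide)
      have h3fin : {n | Tr.pri (am n).1 = 3}.Finite := by
        by_contra h
        have h3 := hcmax 3 (Nat.frequently_atTop_iff_infinite.2 h)
        omega
      obtain ⟨N, hNbd⟩ := (hjfin.union h3fin).bddAbove
      have hN : ∀ n, N + 1 ≤ n → (am n).2 = false ∧ Tr.pri (am n).1 ≠ 3 := by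
        intro n hn
        constructor
        · cases h2 : (am n).2
          · rfl
          · have := hNbd (Set.mem_union_left _ h2); omega
        · intro h3
          have := hNbd (Set.mem_union_right _ h3); omega
      have hstable : ∀ n, N + 1 ≤ n →
          jokerAdamState counterexampleAut am n = jokerAdamState counterexampleAut am (N + 1) := by
        intro n hn
        induction n with
        | zero => omega
        | succ m ih =>
          rcases Nat.eq_or_lt_of_le hn with heq|hlt
          · rw [heq]
          · have hm : N + 1 ≤ m := by omega
            have hb := (hvalid m).2.2.1 (hN m hm).1
            have hns := cex_delta_nonswitch (hmem m) (hN m hm).2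
            show Tr.tgt (am m).1 = _
            rw [← hns.1, hb]
            exact ih hm
      have hev : ∀ᶠ n in atTop, Tr.pri (am n).1 =
          Tr.pri (jstrat (pref (fun m => (w m, am m)) n) (w n)) := by
        rw [eventually_atTop]
        refine ⟨N + 2, fun n hn => ?_⟩
        obtain ⟨m, rfl⟩ : ∃ m, n = m + 1 := ⟨n - 1, by omega⟩
        have hm : N + 1 ≤ m := by omega
        have he : tstate ((pref (fun k => (w k, am k)) (m + 1)).dropLast) =
            jokerAdamState counterexampleAut am (N + 1) := by
          rw [dropLast_pref_succ, tstate_pref_jAS]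
          exact hstable m hm
        have ht : tstate (pref (fun k => (w k, am k)) (m + 1)) =
            jokerAdamState counterexampleAut am (N + 1) := by
          rw [tstate_pref_jAS]
          exact hstable (m + 1) (by omega)
        have hρ : Tr.pri (jstrat (pref (fun k => (w k, am k)) (m + 1)) (w (m + 1))) =
            if w (m + 1) = jokerAdamState counterexampleAut am (N + 1) then 1 else 2 := by
          show (if tstate ((pref (fun k => (w k, am k)) (m + 1)).dropLast) =
              tstate (pref (fun k => (w k, am k)) (m + 1)) then
              (if w (m + 1) = tstate ((pref (fun k => (w k, am k)) (m + 1)).dropLast)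
                then 1 else 2) else 3) = _
          rw [he, ht, if_pos rfl]
        have hlbl : Tr.lbl (am (m + 1)).1 = w (m + 1) := (hvalid (m + 1)).2.1
        have hsrc : Tr.src (am (m + 1)).1 = jokerAdamState counterexampleAut am (N + 1) := by
          rw [(hvalid (m + 1)).2.2.1 (hN (m + 1) (by omega)).1]
          exact hstable (m + 1) (by omega)
        have hns := cex_delta_nonswitch (hmem (m + 1)) (hN (m + 1) (by omega)).2
        rw [hρ, hns.2, hlbl, hsrc]
      exact parityAccept_congr' hev ⟨c, hceven, hcfreq, hcmax⟩
  · -- not history-deterministic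
    rintro ⟨σ, hσ⟩
    obtain ⟨hrun, hacc⟩ := hσ (advW σ)
    have hpa := hacc (cex_lang_univ _)
    have hsrc : ∀ n, Tr.src (σ (pref (advW σ) (n + 1))) = advW σ n := by
      intro n
      induction n with
      | zero => rw [hrun.1]; rfl
      | succ m _ =>
        rw [(hrun.2 m).2.2]
        show Tr.tgt (σ (pref (advW σ) (m + 1))) = advW σ (m + 1)
        rw [pref_advW]
        rfl
    have hodd : ∀ n, Tr.pri (σ (pref (advW σ) (n + 1))) = 1 ∨
        Tr.pri (σ (pref (advW σ) (n + 1))) = 3 := by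
      intro n
      refine cex_delta_src_eq_lbl (hrun.2 n).1 ?_
      rw [(hrun.2 n).2.1, hsrc]
    obtain ⟨c, hce, hcf, _⟩ := hpa
    obtain ⟨n, hn⟩ := hcf.exists
    have hn' : Tr.pri (σ (pref (advW σ) (n + 1))) = c := hn
    rcases hodd n with h|h
    · exact absurd ((hn'.symm.trans h) ▸ hce) (by decide)
    · exact absurd ((hn'.symm.trans h) ▸ hce) (by decide)
end

section
/- Let U be a semantically deterministic Büchi automaton over an alphabet Σ with n states and L(U) = Σ^ω. Then for every state q of U reachable from the initial state and every finite word u ∈ Σ* of length at least 2^n, there exists a finite run of U on u starting at q that contains at least one accepting transition. -/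
/-!
Semantic determinism makes every state reachable from a universal state universal. Let `S k` be
the set of states reachable from `q` on `u[0,k)` through non-accepting transitions only. Two of
`S 0, …, S (2^n)` coincide, say `S i = S j` with `i < j`. Along the infinite word
`u[0,j) u[i,j)^ω`, a run from `q` that has not yet taken an accepting transition stays in the sets
`S k` with `k < j`. The universal state `q` accepts this word, so some accepting transition on a
letter `u[k]` leaves a state of `S k`; its target is again universal, so the run extends over the
rest of `u`.
-/

open Filter

variable {Q P A : Type}

namespace NPA

variable {M : NPA Q A}

theorem IsRun.step_mem {q : Q} {w : ℕ → A} {ρ : ℕ → Tr Q A} (h : M.IsRun q w ρ) (n : ℕ) :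
    (Tr.src (ρ n), w n, Tr.pri (ρ n), Tr.tgt (ρ n)) ∈ M.delta := by
  obtain ⟨hmem, hlbl, -⟩ := h.2 n
  rw [← hlbl]
  exact hmem

theorem FinRun.mono {N : NPA Q A} (hsub : M.delta ⊆ N.delta) {q r : Q} {v : List A}
    (h : M.FinRun q v r) : N.FinRun q v r := by
  induction h with
  | nil => exact .nil _
  | cons ht _ ih => exact .cons (hsub ht) ih

theorem FinRun.snoc {q p r : Q} {v : List A} {a : A} {c : ℕ} (h : M.FinRun q v p)
    (ht : (p, a, c, r) ∈ M.delta) : M.FinRun q (v ++ [a]) r := by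
  induction h with
  | nil => exact .cons ht (.nil r)
  | cons ht' _ ih => exact .cons ht' (ih ht)

theorem langFrom_eq_univ_of_mem_delta (hSD : M.SemDet) {p r : Q} {a : A} {c : ℕ}
    (ht : (p, a, c, r) ∈ M.delta) (hp : M.LangFrom p = Set.univ) :
    M.LangFrom r = Set.univ := by
  have hpres : M.LangFrom r = {w | wcons a w ∈ M.LangFrom p} := hSD _ ht
  simp [hpres, hp]

theorem FinRun.langFrom_eq_univ (hSD : M.SemDet) {p r : Q} {v : List A} (h : M.FinRun p v r)
    (hp : M.LangFrom p = Set.univ) : M.LangFrom r = Set.univ := by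
  induction h with
  | nil => exact hp
  | cons ht _ ih => exact ih (langFrom_eq_univ_of_mem_delta hSD ht hp)

theorem exists_mem_delta_of_langFrom_eq_univ {p : Q} (hp : M.LangFrom p = Set.univ) (a : A) :
    ∃ c r, (p, a, c, r) ∈ M.delta := by
  obtain ⟨ρ, hrun, -⟩ : wcons a (fun _ => a) ∈ M.LangFrom p := hp ▸ trivial
  have h0 := hrun.step_mem 0
  rw [hrun.1] at h0
  exact ⟨_, _, h0⟩

theorem exists_finRun_of_langFrom_eq_univ (hSD : M.SemDet) {p : Q}
    (hp : M.LangFrom p = Set.univ) (v : List A) : ∃ r, M.FinRun p v r := by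
  induction v generalizing p with
  | nil => exact ⟨p, .nil p⟩
  | cons a v ih =>
    obtain ⟨c, p', ht⟩ := exists_mem_delta_of_langFrom_eq_univ hp a
    obtain ⟨r, h⟩ := ih (langFrom_eq_univ_of_mem_delta hSD ht hp)
    exact ⟨r, .cons ht h⟩

theorem IsFinRunOn.cons {q p : Q} {a : A} {c : ℕ} {u : List A} {ρ : ℕ → Tr Q A}
    (ht : (q, a, c, p) ∈ M.delta) (h : M.IsFinRunOn p u ρ) :
    M.IsFinRunOn q (a :: u) (wcons (q, a, c, p) ρ) := by
  refine ⟨fun _ => rfl, fun i hi => ?_⟩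
  cases i with
  | zero => exact ⟨ht, rfl, fun h1 => h.1 (by simpa using h1)⟩
  | succ i =>
    obtain ⟨hmem, hlbl, hsrc⟩ := h.2 i (by simpa using hi)
    exact ⟨hmem, hlbl, fun h1 => hsrc (by simpa using h1)⟩

theorem FinRun.exists_isFinRunOn_cons {q p r : Q} {a : A} {c : ℕ} {u : List A}
    (ht : (q, a, c, p) ∈ M.delta) (h : M.FinRun p u r) :
    ∃ ρ, M.IsFinRunOn q (a :: u) ρ ∧ ρ 0 = (q, a, c, p) := by
  induction h generalizing q a c with
  | nil => exact ⟨fun _ => (q, a, c, _), ⟨fun _ => rfl, fun | 0, _ => ⟨ht, rfl, nofun⟩⟩, rfl⟩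
  | cons ht' _ ih =>
    obtain ⟨ρ, hρ, -⟩ := ih ht'
    exact ⟨_, hρ.cons ht, rfl⟩

theorem FinRun.exists_isFinRunOn_append {q p : Q} {u v : List A} {ρ : ℕ → Tr Q A}
    (h : M.FinRun q u p) (hρ : M.IsFinRunOn p v ρ) :
    ∃ ρ', M.IsFinRunOn q (u ++ v) ρ' ∧ ρ' u.length = ρ 0 := by
  induction h with
  | nil => exact ⟨ρ, hρ, rfl⟩
  | cons ht _ ih =>
    obtain ⟨ρ', hρ', hlen⟩ := ih hρ
    exact ⟨_, hρ'.cons ht, hlen⟩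

def nonAccepting (M : NPA Q A) : NPA Q A where
  init := M.init
  delta := {t ∈ M.delta | Tr.pri t ≠ 2}

theorem nonAccepting_delta_subset : M.nonAccepting.delta ⊆ M.delta := fun _ ht => ht.1

def reach (M : NPA Q A) (q : Q) (v : List A) : Set Q := {p | M.FinRun q v p}

end NPA

theorem ParityAccept.exists_eq_two {pr : ℕ → ℕ} (h : ParityAccept pr)
    (hpr : ∀ n, pr n = 1 ∨ pr n = 2) : ∃ n, pr n = 2 := by
  obtain ⟨c, hc, hfreq, -⟩ := h
  obtain ⟨n, hn⟩ := hfreq.exists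
  refine ⟨n, (hpr n).resolve_left fun h1 => ?_⟩
  rw [← hn, h1] at hc
  exact Nat.not_even_one hc

theorem exists_lt_le_two_pow_card_eq {α : Type} [Fintype α] (g : ℕ → Set α) :
    ∃ i j, i < j ∧ j ≤ 2 ^ Fintype.card α ∧ g i = g j := by
  have hcard : Fintype.card (Set α) < Fintype.card (Fin (2 ^ Fintype.card α + 1)) := by
    simp [Fintype.card_set]
  obtain ⟨k, l, hkl, heq⟩ := Fintype.exists_ne_map_eq_of_card_lt (fun k : Fin _ => g k) hcard
  rcases lt_or_gt_of_ne (Fin.val_ne_of_ne hkl) with hlt | hlt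
  · exact ⟨k, l, hlt, Nat.le_of_lt_succ l.isLt, heq⟩
  · exact ⟨l, k, hlt, Nat.le_of_lt_succ k.isLt, heq.symm⟩

/-- `m ↦ u[loopIdx i j m]` is the pumped word `u[0,j) u[i,j)^ω`. -/
def loopIdx (i j : ℕ) : ℕ → ℕ
  | 0 => 0
  | m + 1 => if loopIdx i j m + 1 = j then i else loopIdx i j m + 1

theorem loopIdx_lt {i j : ℕ} (hij : i < j) (m : ℕ) : loopIdx i j m < j := by
  induction m with
  | zero => exact Nat.zero_lt_of_lt hij
  | succ m ih =>
    show (if loopIdx i j m + 1 = j then i else loopIdx i j m + 1) < j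
    split_ifs with h
    · exact hij
    · omega

theorem apply_loopIdx_succ {α : Type} {S : ℕ → α} {i j : ℕ} (hS : S i = S j) (m : ℕ) :
    S (loopIdx i j (m + 1)) = S (loopIdx i j m + 1) := by
  show S (if loopIdx i j m + 1 = j then i else loopIdx i j m + 1) = _
  split_ifs with h
  · rw [hS, h]
  · rfl

theorem NPA.exists_accepting_step_of_reach_take_eq {U : NPA Q A} (hB : U.IsBuchi) {q : Q}
    (hq : U.LangFrom q = Set.univ) {u : List A} {i j : ℕ} (hij : i < j) (hj : j ≤ u.length)
    (hS : U.nonAccepting.reach q (u.take i) = U.nonAccepting.reach q (u.take j)) :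
    ∃ k, ∃ hk : k < u.length, ∃ p r, U.FinRun q (u.take k) p ∧ (p, u[k], 2, r) ∈ U.delta := by
  by_contra! hnone
  have hf (m : ℕ) : loopIdx i j m < u.length := (loopIdx_lt hij m).trans_le hj
  obtain ⟨ρ, hrun, hacc⟩ : (fun m => u[loopIdx i j m]'(hf m)) ∈ U.LangFrom q := hq ▸ trivial
  have hmem (m : ℕ) (hm : Tr.src (ρ m) ∈ U.nonAccepting.reach q (u.take (loopIdx i j m))) :
      ρ m ∈ U.nonAccepting.delta :=
    ⟨(hrun.2 m).1, fun h2 =>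
      hnone _ (hf m) _ _ (hm.mono nonAccepting_delta_subset) (h2 ▸ hrun.step_mem m)⟩
  have hreach (m : ℕ) : Tr.src (ρ m) ∈ U.nonAccepting.reach q (u.take (loopIdx i j m)) := by
    induction m with
    | zero => rw [hrun.1]; exact .nil q
    | succ m ih =>
      have hlbl : Tr.lbl (ρ m) = u[loopIdx i j m]'(hf m) := (hrun.2 m).2.1
      have hstep : (Tr.src (ρ m), u[loopIdx i j m]'(hf m), Tr.pri (ρ m), Tr.tgt (ρ m)) ∈
          U.nonAccepting.delta := by
        rw [← hlbl]
        exact hmem m ih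
      have hcycle : U.nonAccepting.reach q (u.take (loopIdx i j (m + 1))) =
          U.nonAccepting.reach q (u.take (loopIdx i j m + 1)) :=
        apply_loopIdx_succ (S := fun k => U.nonAccepting.reach q (u.take k)) hS m
      rw [(hrun.2 m).2.2, hcycle, ← List.take_concat_get' _ _ (hf m)]
      exact ih.snoc hstep
  obtain ⟨m, hm⟩ := hacc.exists_eq_two fun m => hB _ (hrun.2 m).1
  exact (hmem m (hreach m)).2 hm

theorem universal_sd_buchi_accepting_transition_general {Q A : Type} [Fintype Q]
    (U : NPA Q A) (hB : U.IsBuchi) (hSD : U.SemDet)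
    (huniv : U.Lang = Set.univ)
    (q : Q) (hreach : ∃ v : List A, U.FinRun U.init v q)
    (u : List A) (hlen : 2 ^ Fintype.card Q ≤ u.length) :
    ∃ ρ : ℕ → Tr Q A, U.IsFinRunOn q u ρ ∧ ∃ i, i < u.length ∧ Tr.pri (ρ i) = 2 := by
  obtain ⟨v, hv⟩ := hreach
  have hq : U.LangFrom q = Set.univ := hv.langFrom_eq_univ hSD huniv
  obtain ⟨i, j, hij, hj, hS⟩ :=
    exists_lt_le_two_pow_card_eq fun k => U.nonAccepting.reach q (u.take k)
  obtain ⟨k, hk, p, r, hp, hacc⟩ :=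
    U.exists_accepting_step_of_reach_take_eq hB hq hij (hj.trans hlen) hS
  have hr : U.LangFrom r = Set.univ :=
    NPA.langFrom_eq_univ_of_mem_delta hSD hacc (hp.langFrom_eq_univ hSD hq)
  obtain ⟨s, hs⟩ := NPA.exists_finRun_of_langFrom_eq_univ hSD hr (u.drop (k + 1))
  obtain ⟨ρ₀, hρ₀, hρ₀_zero⟩ := hs.exists_isFinRunOn_cons hacc
  obtain ⟨ρ, hρ, hρ_k⟩ := hp.exists_isFinRunOn_append hρ₀
  rw [List.cons_getElem_drop_succ, List.take_append_drop] at hρ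
  refine ⟨ρ, hρ, k, hk, ?_⟩
  rw [List.length_take_of_le hk.le, hρ₀_zero] at hρ_k
  exact congrArg Tr.pri hρ_k

/-- If U is a semantically deterministic Büchi automaton with n states and
L(U) = Σ^ω, then from every reachable state q, every finite word u of length at least 2^n
has a finite run from q containing at least one accepting (priority 2) transition. -/
theorem universal_sd_buchi_accepting_transition {Q A : Type} [Fintype Q] [Finite A]
    (U : NPA Q A) (hfin : U.delta.Finite) (hB : U.IsBuchi) (hSD : U.SemDet)
    (huniv : U.Lang = Set.univ)
    (q : Q) (hreach : ∃ v : List A, U.FinRun U.init v q)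
    (u : List A) (hlen : 2 ^ Fintype.card Q ≤ u.length) :
    ∃ ρ : ℕ → Tr Q A, U.IsFinRunOn q u ρ ∧ ∃ i, i < u.length ∧ Tr.pri (ρ i) = 2 :=
  universal_sd_buchi_accepting_transition_general U hB hSD huniv q hreach u hlen
end
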